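/- arXiv:1504.07863 — 2 statements merged into one kernel-verified Lean document; each statement's English description precedes it below -/
import Mathlib

section
/- If v_1 ≥ v_2 ≥ … ≥ v_K, then the WOWA value is at least the p-weighted mean: Σ_{j=1}^K p_j a_j ≤ wowa_{(v,p)}(a) for every a ∈ ℝ^K. -/
/-!
Let `P n = ∑_{i < n} p (σ i)` be the cumulative weights along the sorted order, so `P 0 = 0`,
`P K = 1`, the weighted mean is `∑ (P (j+1) - P j) a (σ j)` and the WOWA value is
`∑ (w*(P (j+1)) - w*(P j)) a (σ j)`. Their difference is `∑ (F (j+1) - F j) a (σ j)` with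
`F = w* ∘ P - P`. Since `v` is nonincreasing, Chebyshev's sum inequality gives `t ≤ w*(t)` on
`[0, 1]`, so `F ≥ 0` vanishes at both ends, and summation by parts against the nonincreasing
`a ∘ σ` makes the difference nonnegative.
-/

open Finset

/-- The piecewise linear function `w*` induced by the weight vector `v`:
`w*(0)=0`, `w*(j/K) = ∑_{i≤j} v i`, linear on each `[(j-1)/K, j/K]`. -/
noncomputable def wstar (K : ℕ) (v : Fin K → ℝ) (t : ℝ) : ℝ :=
  ∑ i : Fin K, v i * min 1 (max 0 (t * (K : ℝ) - (i.1 : ℝ)))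

/-- The WOWA weight `ω_j = w*(∑_{i≤j} p_{σ(i)}) - w*(∑_{i<j} p_{σ(i)})`. -/
noncomputable def wowaWeight (K : ℕ) (v p : Fin K → ℝ) (σ : Equiv.Perm (Fin K))
    (j : Fin K) : ℝ :=
  wstar K v (∑ i ∈ Finset.Iic j, p (σ i)) - wstar K v (∑ i ∈ Finset.Iio j, p (σ i))

/-- The WOWA aggregation of `a` relative to a permutation `σ`
(sorting `a` nonincreasingly gives the WOWA value). -/
noncomputable def wowaW (K : ℕ) (v p : Fin K → ℝ) (σ : Equiv.Perm (Fin K))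
    (a : Fin K → ℝ) : ℝ :=
  ∑ j : Fin K, wowaWeight K v p σ j * a (σ j)

theorem sum_range_min_one_max_zero_sub (K : ℕ) {s : ℝ} (hs : 0 ≤ s) :
    ∑ i ∈ range K, min 1 (max 0 (s - i)) = min (K : ℝ) s := by
  induction K with
  | zero => simp [hs]
  | succ K ih =>
    rw [sum_range_succ, ih]
    push_cast
    rcases le_total s K with h | h
    · rw [min_eq_right h, max_eq_left (by linarith), min_eq_right zero_le_one, add_zero,
        min_eq_right (by linarith)]
    · rw [min_eq_left h, max_eq_right (by linarith)]
      rcases le_total s (K + 1) with h' | h'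
      · rw [min_eq_right (by linarith), min_eq_right h']
        ring
      · rw [min_eq_left (by linarith), min_eq_left h']

theorem wstar_zero (K : ℕ) (v : Fin K → ℝ) : wstar K v 0 = 0 := by
  simp [wstar]

theorem wstar_one (K : ℕ) (v : Fin K → ℝ) : wstar K v 1 = ∑ i, v i := by
  refine sum_congr rfl fun i _ => ?_
  have hi : (i : ℝ) + 1 ≤ K := by exact_mod_cast i.isLt
  rw [one_mul, max_eq_right (by linarith), min_eq_left (by linarith), mul_one]

theorem le_wstar {K : ℕ} {v : Fin K → ℝ} (hvs : ∑ i, v i = 1) (hv : Antitone v) {t : ℝ}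
    (ht0 : 0 ≤ t) (ht1 : t ≤ 1) : t ≤ wstar K v t := by
  obtain rfl | hK := K.eq_zero_or_pos
  · simp at hvs
  have hK' : (0 : ℝ) < K := by exact_mod_cast hK
  have hclamp : Antitone fun i : Fin K => min 1 (max 0 (t * K - i)) := fun i j hij => by
    dsimp only
    gcongr
    exact_mod_cast hij
  have hsum : ∑ i : Fin K, min 1 (max 0 (t * K - i)) = t * K := by
    rw [Fin.sum_univ_eq_sum_range (fun i => min 1 (max 0 (t * K - i))),
      sum_range_min_one_max_zero_sub K (by positivity), min_eq_right (by nlinarith)]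
  have cheb := (hv.monovary hclamp).sum_mul_sum_le_card_mul_sum
  change _ ≤ _ * wstar K v t at cheb
  rw [hvs, hsum, Fintype.card_fin] at cheb
  exact le_of_mul_le_mul_left (by linarith) hK'

theorem sum_range_sub_mul_nonneg {K : ℕ} {F b : ℕ → ℝ}
    (hb : ∀ n, n + 1 < K → b (n + 1) ≤ b n) (hF0 : F 0 = 0) (hFK : F K = 0)
    (hF : ∀ n ≤ K, 0 ≤ F n) :
    0 ≤ ∑ n ∈ range K, (F (n + 1) - F n) * b n := by
  have hpartial : ∀ n, ∑ i ∈ range n, (F (i + 1) - F i) = F n := fun n => by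
    rw [sum_range_sub, hF0, sub_zero]
  have abel := sum_range_by_parts b (fun n => F (n + 1) - F n) K
  simp only [smul_eq_mul, hpartial, hFK, mul_zero, zero_sub] at abel
  rw [sum_congr rfl fun n _ => mul_comm _ _, abel, neg_nonneg]
  refine sum_nonpos fun n hn => mul_nonpos_of_nonpos_of_nonneg ?_ (hF _ (by grind))
  exact sub_nonpos.2 (hb n (by grind))

theorem Fin.sum_sub_mul_nonneg {K : ℕ} {F : ℕ → ℝ} {b : Fin K → ℝ} (hb : Antitone b)
    (hF0 : F 0 = 0) (hFK : F K = 0) (hF : ∀ n ≤ K, 0 ≤ F n) :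
    0 ≤ ∑ j : Fin K, (F (j + 1) - F j) * b j := by
  set b' : ℕ → ℝ := fun n => if h : n < K then b ⟨n, h⟩ else 0
  have hb' : ∀ n, n + 1 < K → b' (n + 1) ≤ b' n := fun n hn => by
    simp only [b', dif_pos hn, dif_pos (Nat.lt_of_succ_lt hn)]
    exact hb (Fin.mk_le_mk.2 n.le_succ)
  have := sum_range_sub_mul_nonneg hb' hF0 hFK hF
  rw [← Fin.sum_univ_eq_sum_range] at this
  simpa [b'] using this

theorem weighted_mean_le_wowa_general (K : ℕ) (v p : Fin K → ℝ)
    (hvs : ∑ j, v j = 1)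
    (hvmono : ∀ i j : Fin K, i ≤ j → v j ≤ v i)
    (hp0 : ∀ j, 0 ≤ p j) (hps : ∑ j, p j = 1)
    (a : Fin K → ℝ) (σ : Equiv.Perm (Fin K))
    (hσ : ∀ i j : Fin K, i ≤ j → a (σ j) ≤ a (σ i)) :
    ∑ j, p j * a j ≤ wowaW K v p σ a := by
  set P : ℕ → ℝ := fun n => ∑ i : Fin K with i.val < n, p (σ i)
  have hIio (j : Fin K) : ∑ i ∈ Iio j, p (σ i) = P j := by
    congr 1; ext i; simp
  have hIic (j : Fin K) : ∑ i ∈ Iic j, p (σ i) = P (j + 1) := by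
    congr 1; ext i; simp
  have hstep (j : Fin K) : P (j + 1) - P j = p (σ j) := by
    rw [← hIic, ← hIio, ← Iio_insert, sum_insert (by simp), add_sub_cancel_right]
  have hP (n : ℕ) : 0 ≤ P n ∧ P n ≤ 1 :=
    ⟨sum_nonneg fun i _ => hp0 _,
      (sum_le_univ_sum_of_nonneg fun i => hp0 (σ i)).trans_eq ((Equiv.sum_comp σ p).trans hps)⟩
  have hPK : P K = 1 := by simp [P, Equiv.sum_comp σ p, hps]
  have key := Fin.sum_sub_mul_nonneg (F := fun n => wstar K v (P n) - P n) (b := a ∘ σ)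
    (fun i j => hσ i j) (by simp [P, wstar_zero]) (by simp [hPK, wstar_one, hvs])
    fun n _ => sub_nonneg.2 (le_wstar hvs (fun i j => hvmono i j) (hP n).1 (hP n).2)
  calc ∑ j, p j * a j = ∑ j : Fin K, (P (j + 1) - P j) * a (σ j) := by
        rw [← Equiv.sum_comp σ]; simp only [hstep]
    _ ≤ ∑ j : Fin K, (wstar K v (P (j + 1)) - wstar K v (P j)) * a (σ j) := by
        rw [← sub_nonneg, ← sum_sub_distrib]
        convert key using 2
        simp only [Function.comp_apply]
        ring
    _ = wowaW K v p σ a := by simp only [wowaW, wowaWeight, hIic, hIio]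

/-- For nonincreasing v, WOWA dominates the p-weighted mean. -/
theorem weighted_mean_le_wowa (K : ℕ) (v p : Fin K → ℝ)
    (hv0 : ∀ j, 0 ≤ v j) (hvs : ∑ j, v j = 1)
    (hvmono : ∀ i j : Fin K, i ≤ j → v j ≤ v i)
    (hp0 : ∀ j, 0 ≤ p j) (hps : ∑ j, p j = 1)
    (a : Fin K → ℝ) (σ : Equiv.Perm (Fin K))
    (hσ : ∀ i j : Fin K, i ≤ j → a (σ j) ≤ a (σ i)) :
    ∑ j, p j * a j ≤ wowaW K v p σ a :=
  weighted_mean_le_wowa_general K v p hvs hvmono hp0 hps a σ hσ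
end

section
/- (Swap step of Lemma 1) Let π be a permutation of {1,…,K} and suppose a_{π(i)} ≤ a_{π(i+1)} for some index i. Let π' be obtained from π by swapping positions i and i+1. Then f_{π'}(a) ≥ f_π(a), with equality when a_{π(i)} = a_{π(i+1)}. -/
open Finset

/-!
By Abel summation, `w*(t) = ∑ᵢ (vᵢ - vᵢ₊₁) min (t K, i + 1)` on `[0, ∞)` (with `v_K = 0`), a
nonnegative combination of concave functions since `v` is nonincreasing and nonnegative. So `w*`
is concave there and has decreasing increments:
`w*(S) + w*(S + x + y) ≤ w*(S + x) + w*(S + y)` for `S, x, y ≥ 0`.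
Swapping positions `i` and `i + 1` changes only the two weights at those positions; with `S` the
`p`-mass in front of position `i`, `x = p_{π(i)}` and `y = p_{π(i+1)}`, the change of `f_π(a)` is
`(a_{π(i+1)} - a_{π(i)}) (w*(S + x) + w*(S + y) - w*(S) - w*(S + x + y))`.
-/

theorem ConcaveOn.sum {𝕜 E β ι : Type*} [Semiring 𝕜] [PartialOrder 𝕜]
    [AddCommMonoid E] [AddCommMonoid β] [PartialOrder β] [IsOrderedAddMonoid β]
    [SMul 𝕜 E] [Module 𝕜 β] {s : Set E} (hs : Convex 𝕜 s) {t : Finset ι}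
    {F : ι → E → β} (hF : ∀ i ∈ t, ConcaveOn 𝕜 s (F i)) :
    ConcaveOn 𝕜 s fun x => ∑ i ∈ t, F i x := by
  simp_rw [← Finset.sum_apply]
  exact Finset.sum_induction _ _ (fun _ _ => ConcaveOn.add) (concaveOn_const (0 : β) hs) hF

theorem ConcaveOn.add_le_add_of_add_eq {𝕜 : Type*} [Field 𝕜] [LinearOrder 𝕜]
    [IsStrictOrderedRing 𝕜] {s : Set 𝕜} {f : 𝕜 → 𝕜} (hf : ConcaveOn 𝕜 s f)
    {a b c d : 𝕜} (ha : a ∈ s) (hd : d ∈ s) (hab : a ≤ b) (hac : a ≤ c)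
    (habcd : a + d = b + c) : f a + f d ≤ f b + f c := by
  rcases hab.eq_or_lt with rfl | hab
  · rw [show d = c by linarith]
  have had : 0 < d - a := by linarith
  set t := (d - b) / (d - a)
  have hb : b = t • a + (1 - t) • d := by
    simp only [t, smul_eq_mul]; field_simp; ring
  have hc : c = (1 - t) • a + t • d := by
    simp only [smul_eq_mul] at hb ⊢; linear_combination -habcd - hb
  have ht0 : 0 ≤ t := div_nonneg (by linarith) had.le
  have ht1 : 0 ≤ 1 - t := by
    rw [sub_nonneg, div_le_one had]; linarith
  have hfb := hf.2 ha hd ht0 ht1 (by ring)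
  have hfc := hf.2 ha hd ht1 ht0 (by ring)
  rw [← hb] at hfb
  rw [← hc] at hfc
  simp only [smul_eq_mul] at hfb hfc
  linarith

def zeroExtend {K : ℕ} (v : Fin K → ℝ) (n : ℕ) : ℝ :=
  if h : n < K then v ⟨n, h⟩ else 0

theorem antitone_zeroExtend {K : ℕ} {v : Fin K → ℝ} (hv0 : ∀ j, 0 ≤ v j) (hv : Antitone v) :
    Antitone (zeroExtend v) := by
  refine antitone_nat_of_succ_le fun n => ?_
  unfold zeroExtend
  split_ifs with h1 h2 h2
  · exact hv (Fin.mk_le_mk.2 n.le_succ)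
  · omega
  · exact hv0 _
  · rfl

theorem min_one_max_zero_sub_eq (c : ℝ) (n : ℕ) :
    min 1 (max 0 (c - n)) = min c ((n + 1 : ℕ) : ℝ) - min c n := by
  push_cast
  simp only [min_def, max_def]
  split_ifs <;> linarith

theorem sum_range_min_one_max_zero {c : ℝ} (hc : 0 ≤ c) (m : ℕ) :
    ∑ k ∈ range m, min 1 (max 0 (c - k)) = min c m := by
  simp_rw [min_one_max_zero_sub_eq c]
  rw [sum_range_sub (fun n : ℕ => min c (n : ℝ)), Nat.cast_zero, min_eq_right hc, sub_zero]

theorem wstar_eq_sum_min (K : ℕ) (v : Fin K → ℝ) {t : ℝ} (ht : 0 ≤ t) :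
    wstar K v t = ∑ i ∈ range K,
      (zeroExtend v i - zeroExtend v (i + 1)) * min (t * K) ((i + 1 : ℕ) : ℝ) := by
  have hext : wstar K v t =
      ∑ i ∈ range (K + 1), zeroExtend v i * min 1 (max 0 (t * K - i)) := by
    rw [sum_range_succ, wstar, ← Fin.sum_univ_eq_sum_range]
    simp [zeroExtend]
  have abel := sum_range_by_parts (zeroExtend v) (fun i => min 1 (max 0 (t * K - i))) (K + 1)
  simp only [smul_eq_mul] at abel
  rw [hext, abel]
  simp only [sum_range_min_one_max_zero (by positivity : 0 ≤ t * K),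
    Nat.add_sub_cancel, zeroExtend, lt_irrefl, dite_false, zero_mul, zero_sub,
    ← sum_neg_distrib, neg_mul_eq_neg_mul, neg_sub]

theorem concaveOn_wstar (K : ℕ) {v : Fin K → ℝ} (hv0 : ∀ j, 0 ≤ v j) (hv : Antitone v) :
    ConcaveOn ℝ (Set.Ici 0) (wstar K v) := by
  refine ConcaveOn.congr ?_ fun t ht => (wstar_eq_sum_min K v ht).symm
  refine ConcaveOn.sum (convex_Ici 0) fun i _ => ConcaveOn.smul ?_ ?_
  · exact sub_nonneg.2 (antitone_zeroExtend hv0 hv i.le_succ)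
  · exact (((concaveOn_id (convex_Ici 0)).smul (Nat.cast_nonneg K)).congr
      fun t _ => by simp [mul_comm]).inf (concaveOn_const _ (convex_Ici 0))

theorem wstar_add_le_add (K : ℕ) {v : Fin K → ℝ} (hv0 : ∀ j, 0 ≤ v j) (hv : Antitone v)
    {s x y : ℝ} (hs : 0 ≤ s) (hx : 0 ≤ x) (hy : 0 ≤ y) :
    wstar K v s + wstar K v (s + x + y) ≤ wstar K v (s + x) + wstar K v (s + y) :=
  (concaveOn_wstar K hv0 hv).add_le_add_of_add_eq hs (Set.mem_Ici.2 (by positivity))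
    (by linarith) (by linarith) (by ring)

theorem Finset.sum_comp_swap_of_mem_iff {α M : Type*} [DecidableEq α] [AddCommMonoid M]
    {s : Finset α} {i j : α} (h : i ∈ s ↔ j ∈ s) (g : α → M) :
    ∑ k ∈ s, g (Equiv.swap i j k) = ∑ k ∈ s, g k := by
  by_cases hi : i ∈ s
  · refine Equiv.Perm.sum_comp _ s g fun k hk => ?_
    by_contra hks
    exact hk (Equiv.swap_apply_of_ne_of_ne (ne_of_mem_of_not_mem hi hks).symm
      (ne_of_mem_of_not_mem (h.1 hi) hks).symm)
  · refine sum_congr rfl fun k hk => ?_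
    rw [Equiv.swap_apply_of_ne_of_ne (ne_of_mem_of_not_mem hk hi)
      (ne_of_mem_of_not_mem hk (mt h.2 hi))]

section AdjacentSwap

variable {K : ℕ} (v p : Fin K → ℝ) {i j : Fin K}

theorem wowaWeight_eq_sub (τ : Equiv.Perm (Fin K)) (k : Fin K) :
    wowaWeight K v p τ k = wstar K v (∑ l ∈ Iio k, p (τ l) + p (τ k))
      - wstar K v (∑ l ∈ Iio k, p (τ l)) := by
  rw [wowaWeight, Iic_eq_cons_Iio, sum_cons, add_comm]

theorem Fin.sum_Iio_of_val_eq_succ (hij : (j : ℕ) = i + 1) (g : Fin K → ℝ) :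
    ∑ l ∈ Iio j, g l = ∑ l ∈ Iio i, g l + g i := by
  have : Iio j = Iic i := by
    ext l
    simp only [mem_Iio, mem_Iic, Fin.lt_def, Fin.le_def]
    omega
  rw [this, Iic_eq_cons_Iio, Finset.sum_cons, add_comm]

theorem wowaWeight_mul_swap_of_ne (hij : (j : ℕ) = i + 1) (π : Equiv.Perm (Fin K))
    {k : Fin K} (hki : k ≠ i) (hkj : k ≠ j) :
    wowaWeight K v p (π * Equiv.swap i j) k = wowaWeight K v p π k := by
  have hki' : (k : ℕ) ≠ i := Fin.val_ne_of_ne hki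
  have hkj' : (k : ℕ) ≠ j := Fin.val_ne_of_ne hkj
  simp only [wowaWeight, Equiv.Perm.mul_apply]
  rw [sum_comp_swap_of_mem_iff (g := fun l => p (π l)),
    sum_comp_swap_of_mem_iff (g := fun l => p (π l))]
  · simp only [mem_Iio, Fin.lt_def]; omega
  · simp only [mem_Iic, Fin.le_def]; omega

theorem wowaW_mul_swap_sub (hij : (j : ℕ) = i + 1) (π : Equiv.Perm (Fin K)) (a : Fin K → ℝ) :
    wowaW K v p (π * Equiv.swap i j) a - wowaW K v p π a
      = (a (π j) - a (π i)) *
        (wstar K v (∑ l ∈ Iio i, p (π l) + p (π i)) + wstar K v (∑ l ∈ Iio i, p (π l) + p (π j))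
          - wstar K v (∑ l ∈ Iio i, p (π l))
          - wstar K v (∑ l ∈ Iio i, p (π l) + p (π i) + p (π j))) := by
  have hij' : i ≠ j := fun h => by rw [h] at hij; omega
  have hσi : (π * Equiv.swap i j) i = π j := by simp
  have hσj : (π * Equiv.swap i j) j = π i := by simp
  have hS : ∑ l ∈ Iio i, p ((π * Equiv.swap i j) l) = ∑ l ∈ Iio i, p (π l) :=
    sum_comp_swap_of_mem_iff (by simp only [mem_Iio, Fin.lt_def]; omega) fun l => p (π l)
  rw [wowaW, wowaW, ← sum_sub_distrib, Fintype.sum_eq_add i j hij' fun k hk => by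
    rw [wowaWeight_mul_swap_of_ne v p hij π hk.1 hk.2, Equiv.Perm.mul_apply,
      Equiv.swap_apply_of_ne_of_ne hk.1 hk.2, sub_self]]
  simp only [wowaWeight_eq_sub, Fin.sum_Iio_of_val_eq_succ hij, hσi, hσj, hS]
  rw [add_right_comm _ (p (π j))]
  ring

end AdjacentSwap

theorem fpi_swap_step_general (K : ℕ) (v p : Fin K → ℝ)
    (hv0 : ∀ j, 0 ≤ v j)
    (hvmono : ∀ i j : Fin K, i ≤ j → v j ≤ v i)
    (hp0 : ∀ j, 0 < p j)
    (a : Fin K → ℝ) (π : Equiv.Perm (Fin K))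
    (i : Fin K) (hi : i.1 + 1 < K)
    (hord : a (π i) ≤ a (π ⟨i.1 + 1, hi⟩)) :
    wowaW K v p π a ≤ wowaW K v p (π * Equiv.swap i ⟨i.1 + 1, hi⟩) a ∧
      (a (π i) = a (π ⟨i.1 + 1, hi⟩) →
        wowaW K v p π a = wowaW K v p (π * Equiv.swap i ⟨i.1 + 1, hi⟩) a) := by
  have hdiff := wowaW_mul_swap_sub v p (j := ⟨i.1 + 1, hi⟩) rfl π a
  have hconcave := wstar_add_le_add K hv0 hvmono
    (sum_nonneg (s := Iio i) fun l _ => (hp0 (π l)).le) (hp0 (π i)).le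
    (hp0 (π ⟨i.1 + 1, hi⟩)).le
  constructor
  · linarith [mul_nonneg (sub_nonneg.2 hord) (sub_nonneg.2 hconcave)]
  · intro heq
    rw [heq, sub_self, zero_mul] at hdiff
    linarith

/-- swap step of Lemma 1: swapping two adjacent, wrongly
ordered positions does not decrease f_π, with equality for equal values. -/
theorem fpi_swap_step (K : ℕ) (v p : Fin K → ℝ)
    (hv0 : ∀ j, 0 ≤ v j) (hvs : ∑ j, v j = 1)
    (hvmono : ∀ i j : Fin K, i ≤ j → v j ≤ v i)
    (hp0 : ∀ j, 0 < p j) (hps : ∑ j, p j = 1)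
    (a : Fin K → ℝ) (π : Equiv.Perm (Fin K))
    (i : Fin K) (hi : i.1 + 1 < K)
    (hord : a (π i) ≤ a (π ⟨i.1 + 1, hi⟩)) :
    wowaW K v p π a ≤ wowaW K v p (π * Equiv.swap i ⟨i.1 + 1, hi⟩) a ∧
      (a (π i) = a (π ⟨i.1 + 1, hi⟩) →
        wowaW K v p π a = wowaW K v p (π * Equiv.swap i ⟨i.1 + 1, hi⟩) a) :=
  fpi_swap_step_general K v p hv0 hvmono hp0 a π i hi hord
end
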